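/- Let N be a finite-index subgroup of ℤⁿ such that every coset of N in ℤⁿ contains a vector of ℓ¹-norm at most k, and let (x₁,…,xₙ) be a minimal generating tuple of N. Then ‖xᵢ‖ ≤ Dₙ·(2k + √n) for every i, where ‖·‖ is the Euclidean norm. -/

import Mathlib

/-- The constants `Dₙ`, defined recursively by `D₁ = 1` and
`Dₙ = D_{n−1}² · (4·n²·D_{n−1}³)ⁿ`. -/
noncomputable def Dc : ℕ → ℝ
  | 0 => 1
  | 1 => 1
  | (n + 2) => (Dc (n + 1)) ^ 2 * (4 * ((n + 2 : ℕ) : ℝ) ^ 2 * (Dc (n + 1)) ^ 3) ^ (n + 2)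

/-- The canonical embedding of `ℤⁿ` into Euclidean space `ℝⁿ`. -/
def toR {n : ℕ} (x : Fin n → ℤ) : EuclideanSpace ℝ (Fin n) := WithLp.toLp 2 (fun i => (x i : ℝ))

/-- `N ∩ Span_ℝ S = ⟨S⟩`: the elements of `N` lying in the real span of `S`
are exactly the subgroup generated by `S`. -/
def SpanCond {n : ℕ} (N : AddSubgroup (Fin n → ℤ)) (S : Set (Fin n → ℤ)) : Prop :=
  {y : Fin n → ℤ | y ∈ N ∧ toR y ∈ Submodule.span ℝ (toR '' S)} =
    (AddSubgroup.closure S : Set (Fin n → ℤ))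

/-- `(x₁,…,xₙ)` is a minimal generating tuple of `N ≤ ℤⁿ`: each `xᵢ` lies in `N` outside the
subgroup generated by the previous ones, satisfies `N ∩ Span_ℝ{x₁,…,xᵢ} = ⟨x₁,…,xᵢ⟩`, and has
minimal Euclidean norm among all such candidates. -/
def IsMinGenTuple {n : ℕ} (N : AddSubgroup (Fin n → ℤ)) (x : Fin n → (Fin n → ℤ)) : Prop :=
  ∀ i : Fin n,
    x i ∈ N ∧
    x i ∉ AddSubgroup.closure (x '' {j | j < i}) ∧
    SpanCond N (x '' {j | j ≤ i}) ∧
    ∀ y ∈ N, y ∉ AddSubgroup.closure (x '' {j | j < i}) →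
      SpanCond N (insert y (x '' {j | j < i})) → ‖toR (x i)‖ ≤ ‖toR y‖

/-!
Induct on `i`, with `V` the real span of the earlier vectors. Rounding a multiple of a unit
normal `u` of `V` coordinatewise away from `V`, and subtracting a short representative of its
coset, gives `w ∈ N` with `⟪u, w⟫ > 0` and `‖w‖ ≤ 2k + √n`. Among the points of `N` in
`V + ℝw`, one with least positive `⟪u, ·⟫` extends the earlier vectors to a saturated tuple,
and rounding coefficients modulo the earlier vectors keeps its norm below
`‖w‖ + ½ Σ_{j<i} ‖xⱼ‖`. Minimality of `xᵢ` gives this recursion, whence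
`‖xᵢ‖ ≤ (3/2)^i (2k + √n) ≤ Dₙ (2k + √n)`.
-/

open Finset

section LatticeBasics

variable {n : ℕ}

def toRHom (n : ℕ) : (Fin n → ℤ) →+ EuclideanSpace ℝ (Fin n) where
  toFun := toR
  map_zero' := by ext; simp [toR]
  map_add' a b := by ext; simp [toR]

@[simp] lemma toRHom_apply (v : Fin n → ℤ) : toRHom n v = toR v := rfl

@[simp] lemma toR_apply (v : Fin n → ℤ) (j : Fin n) : toR v j = (v j : ℝ) := rfl

lemma toR_sub (a b : Fin n → ℤ) : toR (a - b) = toR a - toR b := map_sub (toRHom n) a b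

lemma toR_zsmul (c : ℤ) (a : Fin n → ℤ) : toR (c • a) = (c : ℝ) • toR a := by
  rw [Int.cast_smul_eq_zsmul]; exact map_zsmul (toRHom n) c a

lemma toR_injective : Function.Injective (toR (n := n)) := fun a b h => by
  funext j; simpa using congrArg (fun x : EuclideanSpace ℝ (Fin n) => x j) h

lemma abs_le_norm_toR (v : Fin n → ℤ) (j : Fin n) : |(v j : ℝ)| ≤ ‖toR v‖ :=
  PiLp.norm_apply_le (toR v) j

lemma norm_toR_le_sum_abs (z : Fin n → ℤ) : ‖toR z‖ ≤ ((∑ j, |z j| : ℤ) : ℝ) := by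
  rw [EuclideanSpace.norm_eq, Real.sqrt_le_left (by positivity)]
  push_cast
  simpa only [toR_apply, Real.norm_eq_abs, sq_abs] using
    sum_sq_le_sq_sum_of_nonneg (s := univ) (fun j _ => abs_nonneg (z j : ℝ))

lemma finite_setOf_norm_toR_le (C : ℝ) : {v : Fin n → ℤ | ‖toR v‖ ≤ C}.Finite := by
  refine (Set.finite_Icc (fun _ => -⌈C⌉) fun _ => ⌈C⌉).subset fun v hv => ?_
  have h j : |(v j : ℝ)| ≤ ⌈C⌉ := (abs_le_norm_toR v j).trans (hv.trans (Int.le_ceil C))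
  exact ⟨fun j => by exact_mod_cast (abs_le.1 (h j)).1,
    fun j => by exact_mod_cast (abs_le.1 (h j)).2⟩

lemma toR_mem_span_of_mem_closure {S : Set (Fin n → ℤ)} {y : Fin n → ℤ}
    (hy : y ∈ AddSubgroup.closure S) : toR y ∈ Submodule.span ℝ (toR '' S) := by
  have : AddSubgroup.closure S ≤ (Submodule.span ℝ (toR '' S)).toAddSubgroup.comap (toRHom n) :=
    (AddSubgroup.closure_le _).2 fun v hv => Submodule.subset_span (Set.mem_image_of_mem toR hv)
  exact this hy

lemma spanCond_of_forall {N : AddSubgroup (Fin n → ℤ)} {S : Set (Fin n → ℤ)}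
    (hSN : S ⊆ N)
    (h : ∀ y ∈ N, toR y ∈ Submodule.span ℝ (toR '' S) → y ∈ AddSubgroup.closure S) :
    SpanCond N S :=
  Set.Subset.antisymm (fun y hy => h y hy.1 hy.2) fun _ hy =>
    ⟨(AddSubgroup.closure_le N).2 hSN hy, toR_mem_span_of_mem_closure hy⟩

lemma SpanCond.mem_closure {N : AddSubgroup (Fin n → ℤ)} {S : Set (Fin n → ℤ)}
    (hS : SpanCond N S) {y : Fin n → ℤ} (hyN : y ∈ N)
    (hy : toR y ∈ Submodule.span ℝ (toR '' S)) : y ∈ AddSubgroup.closure S := by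
  rw [SpanCond] at hS
  exact (hS ▸ ⟨hyN, hy⟩ : y ∈ (AddSubgroup.closure S : Set (Fin n → ℤ)))

lemma exists_mem_closure_norm_sub_le (s : Finset (Fin n → ℤ)) {p : EuclideanSpace ℝ (Fin n)}
    (hp : p ∈ Submodule.span ℝ (toR '' (s : Set (Fin n → ℤ)))) :
    ∃ g ∈ AddSubgroup.closure (s : Set (Fin n → ℤ)),
      ‖p - toR g‖ ≤ 1 / 2 * ∑ v ∈ s, ‖toR v‖ := by
  obtain ⟨c, rfl⟩ := (Submodule.mem_span_image_finset_iff_exists_fun' ℝ).1 hp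
  refine ⟨∑ v ∈ s, round (c v) • v,
    AddSubgroup.sum_mem _ fun v hv => AddSubgroup.zsmul_mem _ (AddSubgroup.subset_closure hv) _, ?_⟩
  have hg : toR (∑ v ∈ s, round (c v) • v) = ∑ v ∈ s, (round (c v) : ℝ) • toR v := by
    rw [← toRHom_apply, map_sum]; simp only [toRHom_apply, toR_zsmul]
  rw [hg, ← sum_sub_distrib, mul_sum]
  refine (norm_sum_le _ _).trans (sum_le_sum fun v _ => ?_)
  rw [← sub_smul, norm_smul, Real.norm_eq_abs]
  exact mul_le_mul_of_nonneg_right (abs_sub_round _) (norm_nonneg _)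

end LatticeBasics

section Saturation

variable {n : ℕ} {N : AddSubgroup (Fin n → ℤ)} {s : Finset (Fin n → ℤ)} {w : Fin n → ℤ}
  {f : EuclideanSpace ℝ (Fin n) →ₗ[ℝ] ℝ}

lemma sub_smul_mem_span_of_mem_span_insert
    (hfV : Submodule.span ℝ (toR '' (s : Set (Fin n → ℤ))) ≤ LinearMap.ker f)
    (hfw : f (toR w) ≠ 0) {q : EuclideanSpace ℝ (Fin n)}
    (hq : q ∈ Submodule.span ℝ (toR '' (insert w (s : Set (Fin n → ℤ))))) :
    q - (f q / f (toR w)) • toR w ∈ Submodule.span ℝ (toR '' (s : Set (Fin n → ℤ))) := by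
  rw [Set.image_insert_eq, Submodule.mem_span_insert] at hq
  obtain ⟨a, z, hz, rfl⟩ := hq
  have hfz : f z = 0 := hfV hz
  rw [map_add, map_smul, hfz, smul_eq_mul, add_zero, mul_div_cancel_right₀ _ hfw,
    add_sub_cancel_left]
  exact hz

lemma exists_mem_closure_norm_sub_le_of_mem_span_insert
    (hfV : Submodule.span ℝ (toR '' (s : Set (Fin n → ℤ))) ≤ LinearMap.ker f)
    (hfw : 0 < f (toR w)) {r : Fin n → ℤ}
    (hr : toR r ∈ Submodule.span ℝ (toR '' (insert w (s : Set (Fin n → ℤ))))) :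
    ∃ g ∈ AddSubgroup.closure (s : Set (Fin n → ℤ)),
      ‖toR (r - g)‖ ≤ |f (toR r)| / f (toR w) * ‖toR w‖ + 1 / 2 * ∑ v ∈ s, ‖toR v‖ := by
  set a := f (toR r) / f (toR w)
  obtain ⟨g, hg, hpg⟩ := exists_mem_closure_norm_sub_le s
    (sub_smul_mem_span_of_mem_span_insert hfV hfw.ne' hr)
  refine ⟨g, hg, ?_⟩
  have hsplit : toR (r - g) = a • toR w + (toR r - a • toR w - toR g) := by
    rw [toR_sub]; abel
  have ha : ‖a‖ = |f (toR r)| / f (toR w) := by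
    rw [Real.norm_eq_abs, abs_div, abs_of_pos hfw]
  calc ‖toR (r - g)‖ ≤ ‖a • toR w‖ + ‖toR r - a • toR w - toR g‖ := hsplit ▸ norm_add_le _ _
    _ ≤ _ := by rw [norm_smul, ha]; gcongr

lemma exists_least_pos_norm_le (hsN : (s : Set (Fin n → ℤ)) ⊆ N) (hwN : w ∈ N)
    (hfV : Submodule.span ℝ (toR '' (s : Set (Fin n → ℤ))) ≤ LinearMap.ker f)
    (hfw : 0 < f (toR w)) :
    ∃ y ∈ N, toR y ∈ Submodule.span ℝ (toR '' (insert w (s : Set (Fin n → ℤ)))) ∧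
      0 < f (toR y) ∧ ‖toR y‖ ≤ ‖toR w‖ + 1 / 2 * ∑ v ∈ s, ‖toR v‖ ∧
      ∀ r ∈ N, toR r ∈ Submodule.span ℝ (toR '' (insert w (s : Set (Fin n → ℤ)))) →
        0 < f (toR r) → f (toR y) ≤ f (toR r) := by
  set W := Submodule.span ℝ (toR '' (insert w (s : Set (Fin n → ℤ))))
  set B := ‖toR w‖ + 1 / 2 * ∑ v ∈ s, ‖toR v‖
  -- shifting by `⟨s⟩` preserves `f` and moves any `r` with `0 < f r ≤ f w` into the `B`-ball
  set S := {r | r ∈ N ∧ toR r ∈ W ∧ 0 < f (toR r) ∧ f (toR r) ≤ f (toR w) ∧ ‖toR r‖ ≤ B}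
  have hwS : w ∈ S := ⟨hwN, Submodule.subset_span (Set.mem_image_of_mem _ (Set.mem_insert _ _)),
    hfw, le_rfl, le_add_of_nonneg_right (by positivity)⟩
  obtain ⟨y, hy, hmin⟩ := S.exists_min_image (fun r => f (toR r))
    ((finite_setOf_norm_toR_le B).subset fun r hr => hr.2.2.2.2) ⟨w, hwS⟩
  refine ⟨y, hy.1, hy.2.1, hy.2.2.1, hy.2.2.2.2, fun r hrN hrW hr => ?_⟩
  rcases le_or_gt (f (toR r)) (f (toR w)) with hle | hlt
  · obtain ⟨g, hg, hnorm⟩ := exists_mem_closure_norm_sub_le_of_mem_span_insert hfV hfw hrW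
    have hgV := toR_mem_span_of_mem_closure hg
    have hfrg : f (toR (r - g)) = f (toR r) := by rw [toR_sub, map_sub, hfV hgV, sub_zero]
    have hcoef : |f (toR r)| / f (toR w) * ‖toR w‖ ≤ ‖toR w‖ := by
      rw [abs_of_pos hr]
      exact mul_le_of_le_one_left (norm_nonneg _) ((div_le_one hfw).2 hle)
    have hrgS : r - g ∈ S :=
      ⟨N.sub_mem hrN ((AddSubgroup.closure_le N).2 hsN hg),
        toR_sub r g ▸ W.sub_mem hrW
          (Submodule.span_mono (Set.image_mono (Set.subset_insert _ _)) hgV),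
        hfrg ▸ hr, hfrg ▸ hle, hnorm.trans (add_le_add_left hcoef _)⟩
    exact hfrg ▸ hmin _ hrgS
  · exact hy.2.2.2.1.trans hlt.le

lemma spanCond_insert_of_least_pos (hprev : SpanCond N s) (hsN : (s : Set (Fin n → ℤ)) ⊆ N)
    (hfV : Submodule.span ℝ (toR '' (s : Set (Fin n → ℤ))) ≤ LinearMap.ker f)
    (hfw : 0 < f (toR w)) {y : Fin n → ℤ} (hyN : y ∈ N)
    (hyW : toR y ∈ Submodule.span ℝ (toR '' (insert w (s : Set (Fin n → ℤ)))))
    (hy : 0 < f (toR y))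
    (hleast : ∀ r ∈ N, toR r ∈ Submodule.span ℝ (toR '' (insert w (s : Set (Fin n → ℤ)))) →
      0 < f (toR r) → f (toR y) ≤ f (toR r)) :
    SpanCond N (insert y (s : Set (Fin n → ℤ))) := by
  set W := Submodule.span ℝ (toR '' (insert w (s : Set (Fin n → ℤ))))
  refine spanCond_of_forall (Set.insert_subset hyN hsN) fun v hvN hv => ?_
  have hvW : toR v ∈ W := by
    refine Submodule.span_le.2 ?_ hv
    rintro _ ⟨u, hu | hu, rfl⟩
    · exact hu ▸ hyW
    · exact Submodule.subset_span (Set.mem_image_of_mem _ (Set.mem_insert_of_mem _ hu))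
  set c := ⌊f (toR v) / f (toR y)⌋
  set r := v - c • y
  have hfr : f (toR r) = f (toR v) - c * f (toR y) := by
    rw [toR_sub, toR_zsmul, map_sub, map_smul, smul_eq_mul]
  have hr_nonneg : 0 ≤ f (toR r) := by
    have := (le_div_iff₀ hy).1 (Int.floor_le (f (toR v) / f (toR y)))
    linarith
  have hr_lt : f (toR r) < f (toR y) := by
    have := (div_lt_iff₀ hy).1 (Int.lt_floor_add_one (f (toR v) / f (toR y)))
    linarith
  have hrN : r ∈ N := N.sub_mem hvN (N.zsmul_mem hyN c)
  have hrW : toR r ∈ W := by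
    rw [toR_sub, toR_zsmul]; exact W.sub_mem hvW (W.smul_mem _ hyW)
  have hr_zero : f (toR r) = 0 :=
    le_antisymm (not_lt.1 fun hpos => (hleast r hrN hrW hpos).not_gt hr_lt) hr_nonneg
  have hrV := sub_smul_mem_span_of_mem_span_insert hfV hfw.ne' hrW
  rw [hr_zero, zero_div, zero_smul, sub_zero] at hrV
  rw [← sub_add_cancel v (c • y)]
  exact add_mem (AddSubgroup.closure_mono (Set.subset_insert _ _) (hprev.mem_closure hrN hrV))
    (AddSubgroup.zsmul_mem _ (AddSubgroup.subset_closure (Set.mem_insert _ _)) _)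

lemma exists_spanCond_insert_norm_le (hprev : SpanCond N s) (hsN : (s : Set (Fin n → ℤ)) ⊆ N)
    (hwN : w ∈ N)
    (hfV : Submodule.span ℝ (toR '' (s : Set (Fin n → ℤ))) ≤ LinearMap.ker f)
    (hfw : 0 < f (toR w)) :
    ∃ y ∈ N, y ∉ AddSubgroup.closure (s : Set (Fin n → ℤ)) ∧
      SpanCond N (insert y (s : Set (Fin n → ℤ))) ∧
      ‖toR y‖ ≤ ‖toR w‖ + 1 / 2 * ∑ v ∈ s, ‖toR v‖ := by
  obtain ⟨y, hyN, hyW, hy, hnorm, hleast⟩ := exists_least_pos_norm_le hsN hwN hfV hfw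
  exact ⟨y, hyN, fun h => hy.ne' (hfV (toR_mem_span_of_mem_closure h)),
    spanCond_insert_of_least_pos hprev hsN hfV hfw hyN hyW hy hleast, hnorm⟩

end Saturation

section Candidate

variable {n : ℕ}

lemma exists_int_abs_sub_mul_le_one (a t : ℝ) :
    ∃ m : ℤ, |m - t * a| ≤ 1 ∧ (a = 0 ∨ 0 < a * (m - t * a)) := by
  rcases lt_trichotomy a 0 with ha | rfl | ha
  · refine ⟨⌈t * a⌉ - 1, abs_le.2 ⟨?_, ?_⟩, Or.inr (mul_pos_of_neg_of_neg ha ?_)⟩ <;> push_cast <;>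
      linarith [Int.le_ceil (t * a), Int.ceil_lt_add_one (t * a)]
  · exact ⟨0, by simp, Or.inl rfl⟩
  · refine ⟨⌊t * a⌋ + 1, abs_le.2 ⟨?_, ?_⟩, Or.inr (mul_pos ha ?_)⟩ <;> push_cast <;>
      linarith [Int.floor_le (t * a), Int.lt_floor_add_one (t * a)]

/-- Round each coordinate of `t • u` away from the hyperplane `u⊥`. -/
lemma exists_inner_gt_norm_sub_le {u : EuclideanSpace ℝ (Fin n)} (hu : ‖u‖ = 1) (t : ℝ) :
    ∃ y : Fin n → ℤ, t < inner ℝ u (toR y) ∧ ‖toR y - t • u‖ ≤ Real.sqrt n := by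
  choose m hm using fun j => exists_int_abs_sub_mul_le_one (u j) t
  have hd : ∀ j, (toR m - t • u) j = m j - t * u j := fun j => by simp
  refine ⟨m, ?_, ?_⟩
  · obtain ⟨j, hj⟩ : ∃ j, u j ≠ 0 := by
      by_contra! h
      exact one_ne_zero (hu ▸ norm_eq_zero.2 (by ext j; exact h j))
    have hpos : 0 < inner ℝ u (toR m - t • u) := by
      rw [PiLp.inner_apply]
      refine sum_pos' (fun j _ => ?_) ⟨j, mem_univ _, ?_⟩ <;>
        simp only [hd, RCLike.inner_apply, conj_trivial, mul_comm]
      · exact (hm j).2.elim (fun h => by simp [h]) le_of_lt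
      · exact (hm j).2.resolve_left hj
    have hut : inner ℝ u (t • u) = t := by
      rw [real_inner_smul_right, real_inner_self_eq_norm_sq, hu]; ring
    rw [inner_sub_right, hut] at hpos
    linarith
  · rw [EuclideanSpace.norm_eq]
    refine Real.sqrt_le_sqrt ((sum_le_sum (g := fun _ => 1) fun j _ => ?_).trans_eq (by simp))
    rw [hd, Real.norm_eq_abs, sq_abs]
    exact (sq_le_one_iff_abs_le_one _).2 (hm j).1

lemma exists_mem_inner_pos {N : AddSubgroup (Fin n → ℤ)} {k : ℝ} (hk : 0 ≤ k)
    (hdiam : ∀ y : Fin n → ℤ, ∃ z : Fin n → ℤ, y - z ∈ N ∧ ((∑ i, |z i| : ℤ) : ℝ) ≤ k)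
    {u : EuclideanSpace ℝ (Fin n)} (hu : ‖u‖ = 1) :
    ∃ w ∈ N, 0 < inner ℝ u (toR w) ∧ ‖toR w‖ ≤ 2 * k + Real.sqrt n := by
  obtain ⟨y, hy, hyk⟩ := exists_inner_gt_norm_sub_le hu k
  obtain ⟨z, hzN, hz⟩ := hdiam y
  have hzk : ‖toR z‖ ≤ k := (norm_toR_le_sum_abs z).trans hz
  have hku : ‖k • u‖ = k := by rw [norm_smul, hu, Real.norm_of_nonneg hk, mul_one]
  refine ⟨y - z, hzN, ?_, ?_⟩
  · have := real_inner_le_norm u (toR z)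
    rw [hu, one_mul] at this
    rw [toR_sub, inner_sub_right]
    linarith
  · calc ‖toR (y - z)‖ ≤ ‖k • u‖ + ‖toR y - k • u‖ + ‖toR z‖ := by
          rw [toR_sub]
          exact (norm_sub_le _ _).trans (by gcongr; exact norm_le_norm_add_norm_sub' _ _)
      _ ≤ 2 * k + Real.sqrt n := by linarith

end Candidate

lemma le_three_halves_pow_mul_of_le_add_half_sum {n : ℕ} {b : Fin n → ℝ} {C : ℝ}
    (h : ∀ i, b i ≤ C + 1 / 2 * ∑ j ∈ Iio i, b j) (i : Fin n) : b i ≤ (3 / 2) ^ (i : ℕ) * C := by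
  induction i using WellFoundedLT.induction with
  | _ i ih =>
  calc b i ≤ C + 1 / 2 * ∑ j ∈ Iio i, (3 / 2 : ℝ) ^ (j : ℕ) * C := by
        refine (h i).trans ?_
        gcongr with j hj
        exact ih j (mem_Iio.1 hj)
    _ = C + 1 / 2 * ∑ t ∈ range i, (3 / 2 : ℝ) ^ t * C := by
        rw [← Nat.Iio_eq_range, ← Fin.map_valEmbedding_Iio, sum_map]; rfl
    _ = (3 / 2) ^ (i : ℕ) * C := by
        rw [← sum_mul, geom_sum_eq (by norm_num)]; ring

lemma one_le_Dc : ∀ m, 1 ≤ Dc m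
  | 0 => le_rfl
  | 1 => le_rfl
  | m + 2 => by
    have h := one_le_Dc (m + 1)
    have hm : (1 : ℝ) ≤ ((m + 2 : ℕ) : ℝ) := by norm_cast; omega
    rw [Dc]
    exact one_le_mul_of_one_le_of_one_le (one_le_pow₀ h) (one_le_pow₀
      (one_le_mul_of_one_le_of_one_le (one_le_mul_of_one_le_of_one_le (by norm_num)
        (one_le_pow₀ hm)) (one_le_pow₀ h)))

lemma three_halves_pow_le_Dc_succ : ∀ m, (3 / 2 : ℝ) ^ m ≤ Dc (m + 1)
  | 0 => by simp [Dc]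
  | m + 1 => by
    have h := one_le_Dc (m + 1)
    have hm : (1 : ℝ) ≤ ((m + 2 : ℕ) : ℝ) := by norm_cast; omega
    set B := 4 * ((m + 2 : ℕ) : ℝ) ^ 2 * Dc (m + 1) ^ 3
    have hB : 3 / 2 ≤ B := by
      have := one_le_mul_of_one_le_of_one_le (one_le_pow₀ (n := 2) hm) (one_le_pow₀ (n := 3) h)
      simp only [B, mul_assoc]; linarith
    calc (3 / 2 : ℝ) ^ (m + 1) ≤ B ^ (m + 1) := pow_le_pow_left₀ (by norm_num) hB _
      _ ≤ B ^ (m + 2) := pow_le_pow_right₀ (by linarith) (by omega)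
      _ ≤ Dc (m + 1) ^ 2 * B ^ (m + 2) := le_mul_of_one_le_left (by positivity) (one_le_pow₀ h)
      _ = Dc (m + 2) := by rw [Dc]

lemma three_halves_pow_le_Dc {i n : ℕ} (h : i < n) : (3 / 2 : ℝ) ^ i ≤ Dc n := by
  obtain ⟨m, rfl⟩ : ∃ m, n = m + 1 := ⟨n - 1, by omega⟩
  exact (pow_le_pow_right₀ (by norm_num) (by omega)).trans (three_halves_pow_le_Dc_succ m)

namespace IsMinGenTuple

variable {n : ℕ} {N : AddSubgroup (Fin n → ℤ)} {x : Fin n → (Fin n → ℤ)}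

lemma spanCond_lt (hx : IsMinGenTuple N x) (i : Fin n) : SpanCond N (x '' {j | j < i}) := by
  by_cases hi : (i : ℕ) = 0
  · have hempty : {j | j < i} = ∅ :=
      Set.eq_empty_of_forall_notMem fun j (hj : j < i) => by rw [Fin.lt_def] at hj; omega
    rw [hempty, Set.image_empty]
    refine spanCond_of_forall (Set.empty_subset _) fun y _ hy => ?_
    rw [Set.image_empty, Submodule.span_empty, Submodule.mem_bot] at hy
    rw [toR_injective (hy.trans (map_zero (toRHom n)).symm)]
    exact zero_mem _
  · have hpred : {j | j < i} = {j | j ≤ (⟨i - 1, by omega⟩ : Fin n)} := by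
      ext j; simp only [Set.mem_ofPred_eq, Fin.lt_def, Fin.le_def]; omega
    rw [hpred]
    exact (hx _).2.2.1

lemma norm_le_add_half_sum {k : ℝ} (hk : 0 ≤ k)
    (hdiam : ∀ y : Fin n → ℤ, ∃ z : Fin n → ℤ, y - z ∈ N ∧ ((∑ i, |z i| : ℤ) : ℝ) ≤ k)
    (hx : IsMinGenTuple N x) (i : Fin n) :
    ‖toR (x i)‖ ≤ 2 * k + Real.sqrt n + 1 / 2 * ∑ j ∈ Iio i, ‖toR (x j)‖ := by
  classical
  set s := (Iio i).image x
  have hs : (s : Set (Fin n → ℤ)) = x '' {j | j < i} := by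
    rw [coe_image, coe_Iio]; rfl
  set V := Submodule.span ℝ (toR '' (s : Set (Fin n → ℤ)))
  have hV : V ≠ ⊤ := by
    intro htop
    have hrank : Module.finrank ℝ V ≤ s.card := by
      have := finrank_span_finset_le_card (R := ℝ) (s.image toR)
      rw [coe_image] at this
      exact this.trans card_image_le
    rw [htop, finrank_top, finrank_euclideanSpace_fin] at hrank
    have : s.card ≤ i := (card_image_le (s := Iio i) (f := x)).trans_eq (Fin.card_Iio i)
    omega
  obtain ⟨u₀, hu₀V, hu₀⟩ :=
    Submodule.exists_mem_ne_zero_of_ne_bot (mt Submodule.orthogonal_eq_bot_iff.1 hV)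
  obtain ⟨w, hwN, hw, hwk⟩ := exists_mem_inner_pos hk hdiam (norm_smul_inv_norm (𝕜 := ℝ) hu₀)
  have hfV : V ≤ LinearMap.ker (innerₛₗ ℝ (‖u₀‖⁻¹ • u₀)) := fun v hv =>
    Submodule.inner_left_of_mem_orthogonal hv (Vᗮ.smul_mem _ hu₀V)
  have hsN : (s : Set (Fin n → ℤ)) ⊆ N := hs ▸ Set.image_subset_iff.2 fun j _ => (hx j).1
  obtain ⟨y, hyN, hys, hyspan, hy⟩ :=
    exists_spanCond_insert_norm_le (hs ▸ hx.spanCond_lt i) hsN hwN hfV hw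
  rw [hs] at hys hyspan
  calc ‖toR (x i)‖ ≤ ‖toR y‖ := (hx i).2.2.2 y hyN hys hyspan
    _ ≤ ‖toR w‖ + 1 / 2 * ∑ v ∈ s, ‖toR v‖ := hy
    _ ≤ 2 * k + Real.sqrt n + 1 / 2 * ∑ j ∈ Iio i, ‖toR (x j)‖ := by
      gcongr
      exact sum_image_le_of_nonneg fun _ _ => norm_nonneg _

end IsMinGenTuple

theorem stmt6_general (n : ℕ) (N : AddSubgroup (Fin n → ℤ)) (k : ℝ)
    (hdiam : ∀ y : Fin n → ℤ, ∃ z : Fin n → ℤ, y - z ∈ N ∧ ((∑ i, |z i| : ℤ) : ℝ) ≤ k)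
    (x : Fin n → (Fin n → ℤ)) (hx : IsMinGenTuple N x) :
    ∀ i : Fin n, ‖toR (x i)‖ ≤ Dc n * (2 * k + Real.sqrt n) := by
  intro i
  obtain ⟨z, -, hz⟩ := hdiam 0
  have hk : 0 ≤ k := le_trans (by positivity) hz
  calc ‖toR (x i)‖ ≤ (3 / 2) ^ (i : ℕ) * (2 * k + Real.sqrt n) :=
        le_three_halves_pow_mul_of_le_add_half_sum (hx.norm_le_add_half_sum hk hdiam) i
    _ ≤ Dc n * (2 * k + Real.sqrt n) := by
        gcongr
        exact three_halves_pow_le_Dc i.isLt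

/-- Let `N ≤ ℤⁿ` be of finite index such that every coset of `N` in `ℤⁿ`
contains a vector of ℓ¹-norm at most `k`, and let `(x₁,…,xₙ)` be a minimal generating
tuple of `N`.  Then `‖xᵢ‖ ≤ Dₙ·(2k + √n)` for every `i`, in the Euclidean norm. -/
theorem stmt6 (n : ℕ) (N : AddSubgroup (Fin n → ℤ)) (hN : N.FiniteIndex) (k : ℝ)
    (hdiam : ∀ y : Fin n → ℤ, ∃ z : Fin n → ℤ, y - z ∈ N ∧ ((∑ i, |z i| : ℤ) : ℝ) ≤ k)
    (x : Fin n → (Fin n → ℤ)) (hx : IsMinGenTuple N x) :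
    ∀ i : Fin n, ‖toR (x i)‖ ≤ Dc n * (2 * k + Real.sqrt n) :=
  stmt6_general n N k hdiam x hx
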